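/- arXiv:1108.1453 — 2 statements merged into one kernel-verified Lean document; each statement's English description precedes it below -/
import Mathlib

section
/- For any topological spaces A, B, C, there is a continuous map (A ∗ B) × C → (A × C) ∗ (B × C), where ∗ denotes the topological join, which is natural in A, B, and C. -/
/-- The relation generating the topological join `A ∗ B` as a quotient of
`A × B × [0,1]`: `(a, b, 0) ∼ (a, b', 0)` and `(a, b, 1) ∼ (a', b, 1)`. -/
inductive JoinRel (A : Type) (B : Type) :
    A × B × unitInterval → A × B × unitInterval → Prop
  | zero (a : A) (b b' : B) : JoinRel A B (a, b, 0) (a, b', 0)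
  | one (a a' : A) (b : B) : JoinRel A B (a, b, 1) (a', b, 1)

/-- The topological join `A ∗ B`. -/
def Join (A : Type) (B : Type) : Type := Quot (JoinRel A B)

instance (A B : Type) [TopologicalSpace A] [TopologicalSpace B] :
    TopologicalSpace (Join A B) :=
  inferInstanceAs (TopologicalSpace (Quot _))

/-- Functoriality of the join in both variables. -/
def Join.map {A A' B B' : Type} (f : A → A') (g : B → B') :
    Join A B → Join A' B' :=
  Quot.map (fun p => (f p.1, g p.2.1, p.2.2))
    (fun p q h => by cases h <;> constructor)

/-!
The distributor sends `([a, b, t], c)` to `[(a, c), (b, c), s t]`, where `s : I → I` collapses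
`[0, 1/3]` to `0` and `[2/3, 1]` to `1`. Continuity cannot be obtained by lifting along
`(A × B × I) × C → (A ∗ B) × C`, which need not be a quotient map when `C` is not locally compact.
Instead it is checked pointwise on neighbourhoods `O × W`, with `O` the image of a saturated open
set. Away from the ends any box avoiding `t ∈ {0, 1}` is saturated. Near `t = 0` the map does not
depend on `b` and `t` on the collar where `s = 0`, so a box `N_A × B × [0, ε)` works; symmetrically
near `t = 1`.
-/

open Set Filter Topology unitInterval

theorem continuousAt_quot_prod_of_saturated {X C Z : Type*} [TopologicalSpace X]
    [TopologicalSpace C] [TopologicalSpace Z] {r : X → X → Prop} {F : Quot r × C → Z}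
    {f : X × C → Z}
    (hF : ∀ x c, F (Quot.mk r x, c) = f (x, c)) {p : X} {c : C}
    (h : ∀ U, IsOpen U → f (p, c) ∈ U → ∃ P : Set X, IsOpen P ∧ p ∈ P ∧
      (∀ x y, r x y → (x ∈ P ↔ y ∈ P)) ∧
      ∃ W : Set C, IsOpen W ∧ c ∈ W ∧ ∀ x ∈ P, ∀ c' ∈ W, f (x, c') ∈ U) :
    ContinuousAt F (Quot.mk r p, c) := by
  refine (nhds_basis_opens _).tendsto_right_iff.2 fun U ⟨hxU, hU⟩ => ?_
  obtain ⟨P, hP, hpP, hsat, W, hW, hcW, hPW⟩ := h U hU (hF p c ▸ hxU)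
  let O : Set (Quot r) := Quot.lift (· ∈ P) fun x y hxy => propext (hsat x y hxy)
  have hO : IsOpen O := isOpen_coinduced.2 hP
  filter_upwards [prod_mem_nhds (hO.mem_nhds hpP) (hW.mem_nhds hcW)]
  rintro ⟨q, c'⟩ ⟨hq, hc'⟩
  induction q using Quot.ind
  exact hF _ _ ▸ hPW _ hq _ hc'

theorem Join.continuous_of_collars {A B C Z : Type} [TopologicalSpace A] [TopologicalSpace B]
    [TopologicalSpace C] [TopologicalSpace Z] {F : Join A B × C → Z}
    {f : (A × B × I) × C → Z} (hf : Continuous f)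
    (hF : ∀ p c, F (Quot.mk _ p, c) = f (p, c))
    (h0 : ∀ᶠ t in 𝓝 0, ∀ a b b' c, f ((a, b, t), c) = f ((a, b', 0), c))
    (h1 : ∀ᶠ t in 𝓝 1, ∀ a a' b c, f ((a, b, t), c) = f ((a', b, 1), c)) :
    Continuous F := by
  refine continuous_iff_continuousAt.2 fun ⟨x, c⟩ => ?_
  induction x using Quot.ind with | mk p => ?_
  obtain ⟨a, b, t⟩ := p
  refine continuousAt_quot_prod_of_saturated (r := JoinRel A B) hF fun U hU hpU => ?_
  rcases eq_or_ne t 0 with rfl | ht0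
  · obtain ⟨T, hT, hTo, h0T⟩ := eventually_nhds_iff.1 h0
    have hUb : IsOpen {z : A × C | f ((z.1, b, 0), z.2) ∈ U} := hU.preimage (by fun_prop)
    obtain ⟨NA, W, hNA, hW, haNA, hcW, hNAW⟩ := isOpen_prod_iff.1 hUb a c hpU
    refine ⟨NA ×ˢ univ ×ˢ (T \ {1}), hNA.prod (isOpen_univ.prod (hTo.sdiff isClosed_singleton)),
      ⟨haNA, trivial, h0T, zero_ne_one⟩, ?_, W, hW, hcW, ?_⟩
    · rintro _ _ (_ | _) <;> simp
    · rintro ⟨a', b', t'⟩ ⟨ha', -, ht', -⟩ c' hc'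
      rw [hT t' ht']
      exact hNAW (mk_mem_prod ha' hc')
  rcases eq_or_ne t 1 with rfl | ht1
  · obtain ⟨T, hT, hTo, h1T⟩ := eventually_nhds_iff.1 h1
    have hUa : IsOpen {z : B × C | f ((a, z.1, 1), z.2) ∈ U} := hU.preimage (by fun_prop)
    obtain ⟨NB, W, hNB, hW, hbNB, hcW, hNBW⟩ := isOpen_prod_iff.1 hUa b c hpU
    refine ⟨univ ×ˢ NB ×ˢ (T \ {0}), isOpen_univ.prod (hNB.prod (hTo.sdiff isClosed_singleton)),
      ⟨trivial, hbNB, h1T, one_ne_zero⟩, ?_, W, hW, hcW, ?_⟩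
    · rintro _ _ (_ | _) <;> simp
    · rintro ⟨a', b', t'⟩ ⟨-, hb', ht', -⟩ c' hc'
      rw [hT t' ht']
      exact hNBW (mk_mem_prod hb' hc')
  obtain ⟨N, W, hN, hW, hpN, hcW, hNW⟩ := isOpen_prod_iff.1 (hU.preimage hf) (a, b, t) c hpU
  have hends : IsOpen ({0, 1} : Set I)ᶜ := (toFinite _).isClosed.isOpen_compl
  refine ⟨N ∩ univ ×ˢ univ ×ˢ {0, 1}ᶜ, hN.inter (isOpen_univ.prod (isOpen_univ.prod hends)),
    ⟨hpN, trivial, trivial, by simp [ht0, ht1]⟩, ?_, W, hW, hcW, fun x hx c' hc' => ?_⟩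
  · rintro _ _ (_ | _) <;> simp
  · exact hNW ⟨hx.1, hc'⟩

noncomputable def unitInterval.stretchMiddleThird (t : I) : I :=
  projIcc 0 1 zero_le_one (3 * (t : ℝ) - 1)

namespace unitInterval

@[fun_prop]
theorem continuous_stretchMiddleThird : Continuous stretchMiddleThird :=
  continuous_projIcc.comp (by fun_prop)

theorem eventually_stretchMiddleThird_eq_zero : ∀ᶠ t in 𝓝 0, stretchMiddleThird t = 0 := by
  filter_upwards [continuous_subtype_val.tendsto (0 : I) |>.eventually
    (eventually_lt_nhds (show ((0 : I) : ℝ) < 1 / 3 by norm_num))] with t ht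
  rw [stretchMiddleThird, projIcc_of_le_left _ (by linarith)]
  rfl

theorem eventually_stretchMiddleThird_eq_one : ∀ᶠ t in 𝓝 1, stretchMiddleThird t = 1 := by
  filter_upwards [continuous_subtype_val.tendsto (1 : I) |>.eventually
    (eventually_gt_nhds (show (2 / 3 : ℝ) < ((1 : I) : ℝ) by norm_num))] with t ht
  rw [stretchMiddleThird, projIcc_of_right_le _ (by linarith)]
  rfl

theorem stretchMiddleThird_zero : stretchMiddleThird 0 = 0 :=
  eventually_stretchMiddleThird_eq_zero.self_of_nhds

theorem stretchMiddleThird_one : stretchMiddleThird 1 = 1 :=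
  eventually_stretchMiddleThird_eq_one.self_of_nhds

end unitInterval

noncomputable def Join.prodDistrib (A B C : Type) : Join A B × C → Join (A × C) (B × C) :=
  fun x => Quot.map (fun p => ((p.1, x.2), (p.2.1, x.2), stretchMiddleThird p.2.2))
    (fun p q h => by
      cases h
      · rw [stretchMiddleThird_zero]; exact .zero _ _ _
      · rw [stretchMiddleThird_one]; exact .one _ _ _) x.1

theorem Join.continuous_prodDistrib (A B C : Type) [TopologicalSpace A] [TopologicalSpace B]
    [TopologicalSpace C] : Continuous (prodDistrib A B C) := by
  refine continuous_of_collars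
    (f := fun x => Quot.mk _ ((x.1.1, x.2), (x.1.2.1, x.2), stretchMiddleThird x.1.2.2))
    (continuous_quot_mk.comp (by fun_prop)) (fun _ _ => rfl) ?_ ?_
  · filter_upwards [eventually_stretchMiddleThird_eq_zero] with t ht a b b' c
    simp only [ht, stretchMiddleThird_zero]
    exact Quot.sound (.zero _ _ _)
  · filter_upwards [eventually_stretchMiddleThird_eq_one] with t ht a a' b c
    simp only [ht, stretchMiddleThird_one]
    exact Quot.sound (.one _ _ _)

theorem Join.map_prodDistrib {A A' B B' C C' : Type} (f : A → A') (g : B → B') (h : C → C') :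
    Join.map (Prod.map f h) (Prod.map g h) ∘ prodDistrib A B C =
      prodDistrib A' B' C' ∘ Prod.map (Join.map f g) h := by
  funext ⟨x, c⟩
  induction x using Quot.ind
  rfl

/-- There is a continuous map `(A ∗ B) × C → (A × C) ∗ (B × C)`, natural in
`A`, `B`, and `C`. -/
theorem join_prod_distributor :
    ∃ d : ∀ (A B C : Type) [TopologicalSpace A] [TopologicalSpace B]
        [TopologicalSpace C], Join A B × C → Join (A × C) (B × C),
      (∀ (A B C : Type) [TopologicalSpace A] [TopologicalSpace B]
          [TopologicalSpace C], Continuous (d A B C)) ∧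
      (∀ (A A' B B' C C' : Type) [TopologicalSpace A] [TopologicalSpace A']
          [TopologicalSpace B] [TopologicalSpace B'] [TopologicalSpace C]
          [TopologicalSpace C']
          (f : A → A') (g : B → B') (h : C → C'),
          Continuous f → Continuous g → Continuous h →
          Join.map (Prod.map f h) (Prod.map g h) ∘ d A B C =
            d A' B' C' ∘ Prod.map (Join.map f g) h) :=
  ⟨fun A B C _ _ _ => Join.prodDistrib A B C,
    fun A B C _ _ _ => Join.continuous_prodDistrib A B C,
    fun _ _ _ _ _ _ _ _ _ _ _ _ f g h _ _ _ => Join.map_prodDistrib f g h⟩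
end

section
/- If A is path-connected and B is nonempty, then the join A ∗ B is simply connected. -/
/-!
Cover `A ∗ B` by the open sets `lower = {t ≠ 1}` and `upper = {t ≠ 0}` and take the base
point `[a₀, b₀, 0]`. Each set contracts inside the join onto the base point: a point
`[a, b, t]` of `upper` moves up to `[a, b, 1] = [a₀, b, 1]` and then down to
`[a₀, b, 0] = [a₀, b₀, 0]`; a point of `lower` moves down to `[a, b, 0] = [a, b₀, 0]` and then
follows the first recipe. On the overlap the two tracks are homotopic: a path from `a` to `a₀`
in `A`, kept at height `t`, reduces this to `a = a₀`, where both tracks differ from the descent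
along `{a₀} × {b} × I` only by backtracking. The classes `c x` of the tracks satisfy
`[p] · c y = c x` for every path `p` inside `lower` or inside `upper` (the tracks along `p`
sweep out a square), hence, after subdividing, for every path; cancelling `c y` shows that any
two paths with the same endpoints are homotopic.
-/

open Set Topology unitInterval

section

variable {X : Type*} [TopologicalSpace X] {x₀ : X}

theorem Path.coe_trans_congr {x y z x' y' z' : X}
    {p : Path x y} {q : Path y z} {p' : Path x' y'} {q' : Path y' z'} (hp : ⇑p = ⇑p')
    (hq : ⇑q = ⇑q') : ⇑(p.trans q) = ⇑(p'.trans q') := by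
  ext t
  simp only [Path.trans_apply, hp, hq]

theorem Path.Homotopic.trans_cast_refl {x y z : X} (p : Path x y) (h : y = z) :
    (p.trans ((Path.refl z).cast h rfl)).Homotopic (p.cast rfl h.symm) := by
  subst h
  exact trans_refl p

theorem SimplyConnectedSpace.of_trans_eq (c : ∀ x : X, Path.Homotopic.Quotient x x₀)
    (hc : ∀ {x y : X} (p : Path x y), (Path.Homotopic.Quotient.mk p).trans (c y) = c x) :
    SimplyConnectedSpace X := by
  have hjoined (x : X) : Joined x x₀ := by
    obtain ⟨γ, -⟩ := Path.Homotopic.Quotient.mk_surjective (c x)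
    exact ⟨γ⟩
  rw [simply_connected_iff_paths_homotopic']
  refine ⟨⟨⟨x₀⟩, fun x y => (hjoined x).trans (hjoined y).symm⟩, fun {x y} p q => ?_⟩
  have h := congrArg (fun γ => γ.trans (c y).symm) ((hc p).trans (hc q).symm)
  simp only [Path.Homotopic.Quotient.trans_assoc, Path.Homotopic.Quotient.trans_symm,
    Path.Homotopic.Quotient.trans_refl] at h
  exact Path.Homotopic.Quotient.eq.mp h

theorem ContinuousMap.Homotopy.trans_evalAt_eq {U : Set X}
    (H : ((ContinuousMap.id X).restrict U).Homotopy (.const U x₀))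
    {x y : U} (p : Path (x : X) y) (hp : range p ⊆ U) :
    (Path.Homotopic.Quotient.mk p).trans (.mk (H.evalAt y)) = .mk (H.evalAt x) := by
  let q : Path x y :=
    ⟨⟨fun t => ⟨p t, hp (mem_range_self t)⟩, by fun_prop⟩,
      Subtype.ext p.source, Subtype.ext p.target⟩
  have hsquare := Path.Homotopic.map_trans_evalAt H q
  have hincl : q.map (map_continuous ((ContinuousMap.id X).restrict U)) = p := by
    ext; rfl
  have hconst : q.map (map_continuous (ContinuousMap.const U x₀)) = Path.refl x₀ := by
    ext; rfl
  rw [hincl, hconst] at hsquare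
  exact Path.Homotopic.Quotient.eq.mpr (hsquare.trans (Path.Homotopic.trans_refl _))

namespace Path.Homotopic.Quotient

theorem trans_eq_of_isOpen_cover {ι : Type*} {U : ι → Set X} (hU : ∀ i, IsOpen (U i))
    (hcover : ⋃ i, U i = univ) (c : ∀ x : X, Path.Homotopic.Quotient x x₀)
    (hc : ∀ i {x y : X} (p : Path x y), range p ⊆ U i → (mk p).trans (c y) = c x)
    {x y : X} (p : Path x y) : (mk p).trans (c y) = c x := by
  obtain ⟨t, ht0, ht_mono, ⟨n, htn⟩, ht_sub⟩ :=
    exists_monotone_Icc_subset_open_cover_unitInterval (fun i => (hU i).preimage p.continuous)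
      (by simp [← preimage_iUnion, hcover])
  have hprefix : ∀ k, (mk (p.subpath 0 (t k))).trans (c (p (t k))) = c (p 0) := by
    intro k
    induction k with
    | zero => rw [ht0, Path.subpath_self, mk_refl, refl_trans]
    | succ k ih =>
      obtain ⟨i, hi⟩ := ht_sub k
      have hrange : range (p.subpath (t k) (t (k + 1))) ⊆ U i := by
        rw [Path.range_subpath_of_le _ _ _ (ht_mono k.le_succ), image_subset_iff]
        exact hi
      rw [← ih, ← hc i _ hrange, ← trans_assoc, ← mk_trans,
        eq.mpr ⟨Path.Homotopy.subpathTransSubpath p 0 (t k) (t (k + 1))⟩]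
  have hcast : ∀ {x' y'} (hx : x' = x) (hy : y' = y),
      ((mk p).cast hx hy).trans (c y') = c x' → (mk p).trans (c y) = c x := by
    rintro _ _ rfl rfl h
    simpa using h
  have h1 := hprefix n
  rw [htn n le_rfl, Path.subpath_zero_one, mk_cast] at h1
  exact hcast p.source p.target h1

end Path.Homotopic.Quotient

theorem SimplyConnectedSpace.of_isOpen_union {U V : Set X} (hU : IsOpen U) (hV : IsOpen V)
    (hUV : U ∪ V = univ) (F : ((ContinuousMap.id X).restrict U).Homotopy (.const U x₀))
    (G : ((ContinuousMap.id X).restrict V).Homotopy (.const V x₀))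
    (hFG : ∀ x (hxU : x ∈ U) (hxV : x ∈ V),
      (F.evalAt ⟨x, hxU⟩).Homotopic (G.evalAt ⟨x, hxV⟩)) :
    SimplyConnectedSpace X := by
  classical
  have hmemV {x : X} (hxU : x ∉ U) : x ∈ V :=
    (hUV ▸ mem_univ x : x ∈ U ∪ V).resolve_left hxU
  let c (x : X) : Path.Homotopic.Quotient x x₀ :=
    if hxU : x ∈ U then .mk (F.evalAt ⟨x, hxU⟩) else .mk (G.evalAt ⟨x, hmemV hxU⟩)
  have hcU {x : X} (hxU : x ∈ U) : c x = .mk (F.evalAt ⟨x, hxU⟩) := dif_pos hxU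
  have hcV {x : X} (hxV : x ∈ V) : c x = .mk (G.evalAt ⟨x, hxV⟩) := by
    by_cases hxU : x ∈ U
    · exact (hcU hxU).trans (Path.Homotopic.Quotient.eq.mpr (hFG x hxU hxV))
    · exact dif_neg hxU
  refine of_trans_eq c fun p => Path.Homotopic.Quotient.trans_eq_of_isOpen_cover
    (U := fun b => cond b U V) (fun b => by cases b <;> assumption)
    (by rwa [← union_eq_iUnion]) c (fun b x y p hp => ?_) p
  have hx : x ∈ cond b U V := hp ⟨0, p.source⟩
  have hy : y ∈ cond b U V := hp ⟨1, p.target⟩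
  cases b
  · rw [hcV hx, hcV hy]
    exact G.trans_evalAt_eq (x := ⟨x, hx⟩) (y := ⟨y, hy⟩) p hp
  · rw [hcU hx, hcU hy]
    exact F.trans_evalAt_eq (x := ⟨x, hx⟩) (y := ⟨y, hy⟩) p hp

theorem Topology.IsQuotientMap.exists_homotopy_restrict_const {Y : Type*}
    [TopologicalSpace Y] {f : Y → X} (hf : IsQuotientMap f) {U : Set X} (hU : IsOpen U)
    (γ : ∀ y, Path (f y) x₀) (hγ : Continuous ↿γ)
    (hγf : ∀ y y', f y = f y' → f y ∈ U → ⇑(γ y) = ⇑(γ y')) :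
    ∃ H : ((ContinuousMap.id X).restrict U).Homotopy (.const U x₀),
      ∀ y (hy : f y ∈ U), H.evalAt ⟨f y, hy⟩ = γ y := by
  have hf' := hf.restrictPreimage_isOpen hU
  let g : C(f ⁻¹' U, C(I, X)) :=
    ⟨fun y => (γ y).toContinuousMap, ContinuousMap.continuous_of_continuous_uncurry _
      (hγ.comp (continuous_subtype_val.prodMap continuous_id))⟩
  have hg : Function.FactorsThrough g (U.restrictPreimage f) := fun y y' h =>
    ContinuousMap.ext <| congrFun <| hγf y y' (congrArg Subtype.val h) y.2
  let L := IsQuotientMap.lift (f := ⟨_, hf'.continuous⟩) hf' g hg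
  have hL (y : f ⁻¹' U) : L (U.restrictPreimage f y) = γ y :=
    DFunLike.congr_fun (IsQuotientMap.lift_comp (f := ⟨_, hf'.continuous⟩) hf' g hg) y
  refine ⟨{ toFun := fun p => L p.2 p.1
            map_zero_left := fun u => ?_
            map_one_left := fun u => ?_ }, fun y hy => Path.ext ?_⟩
  · obtain ⟨y, rfl⟩ := hf'.surjective u
    simp [hL]
  · obtain ⟨y, rfl⟩ := hf'.surjective u
    simp [hL]
  · funext r
    exact DFunLike.congr_fun (hL ⟨y, hy⟩) r

end

namespace Join

variable {A B : Type}

abbrev mk (p : A × B × I) : Join A B := Quot.mk _ p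

theorem mk_zero (a : A) (b b' : B) : mk (a, b, 0) = mk (a, b', 0) := Quot.sound (.zero a b b')

theorem mk_one (a a' : A) (b : B) : mk (a, b, 1) = mk (a', b, 1) := Quot.sound (.one a a' b)

theorem apply_eq_of_mk_eq {Z : Type*} {S : Set I} (g : A × B × I → Z)
    (hg : ∀ p q, JoinRel A B p q → p.2.2 ∈ S → g p = g q) {p q : A × B × I}
    (h : mk p = mk q) (hp : p.2.2 ∈ S) : g p = g q := by
  suffices ∀ p q, Relation.EqvGen (JoinRel A B) p q →
      p.2.2 = q.2.2 ∧ (p.2.2 ∈ S → g p = g q) from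
    (this p q (Quot.eqvGen_exact h)).2 hp
  intro p q hpq
  induction hpq with
  | rel p q hpq => exact ⟨by cases hpq <;> rfl, hg p q hpq⟩
  | refl p => exact ⟨rfl, fun _ => rfl⟩
  | symm p q _ ih => exact ⟨ih.1.symm, fun hq => (ih.2 (ih.1 ▸ hq)).symm⟩
  | trans p q r _ _ ih₁ ih₂ =>
    exact ⟨ih₁.1.trans ih₂.1, fun hp => (ih₁.2 hp).trans (ih₂.2 (ih₁.1 ▸ hp))⟩

def height : Join A B → I := Quot.lift (fun p => p.2.2) (by rintro _ _ (_ | _) <;> rfl)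

def lower : Set (Join A B) := height ⁻¹' {1}ᶜ

def upper : Set (Join A B) := height ⁻¹' {0}ᶜ

theorem lower_union_upper : (lower ∪ upper : Set (Join A B)) = univ := by
  refine eq_univ_of_forall fun x => ?_
  by_cases hx : height x = 1
  · exact Or.inr fun h => one_ne_zero (hx.symm.trans h)
  · exact Or.inl hx

variable [TopologicalSpace A] [TopologicalSpace B]

theorem isQuotientMap_mk : IsQuotientMap (mk : A × B × I → Join A B) := isQuotientMap_quot_mk

@[fun_prop]
theorem continuous_mk : Continuous (mk : A × B × I → Join A B) := isQuotientMap_mk.continuous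

theorem continuous_height : Continuous (height : Join A B → I) :=
  continuous_quot_lift _ (by fun_prop)

def segment (a : A) (b : B) : Path (mk (a, b, 0)) (mk (a, b, 1)) where
  toFun t := mk (a, b, t)
  source' := rfl
  target' := rfl

theorem isOpen_lower : IsOpen (lower : Set (Join A B)) :=
  isOpen_compl_singleton.preimage continuous_height

theorem isOpen_upper : IsOpen (upper : Set (Join A B)) :=
  isOpen_compl_singleton.preimage continuous_height

variable (a₀ : A) (b₀ : B)

noncomputable def viaTop (p : A × B × I) : Path (mk p) (mk (a₀, b₀, 0)) :=
  ((segment p.1 p.2.1).subpath p.2.2 1).trans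
    (((segment a₀ p.2.1).subpath 1 0).cast (mk_one p.1 a₀ p.2.1) (mk_zero a₀ b₀ p.2.1))

noncomputable def viaBottom (p : A × B × I) : Path (mk p) (mk (a₀, b₀, 0)) :=
  ((segment p.1 p.2.1).subpath p.2.2 0).trans
    ((viaTop a₀ b₀ (p.1, b₀, 0)).cast (mk_zero p.1 p.2.1 b₀) rfl)

theorem continuous_viaTop : Continuous ↿(viaTop (A := A) a₀ b₀) := by
  refine Path.trans_continuous_family _ ?_ _ ?_
  · exact continuous_mk.comp (by fun_prop)
  · exact continuous_mk.comp (by fun_prop)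

theorem continuous_viaBottom : Continuous ↿(viaBottom (A := A) a₀ b₀) := by
  refine Path.trans_continuous_family _ ?_ _ ?_
  · exact continuous_mk.comp (by fun_prop)
  · have h : Continuous fun q : (A × B × I) × I => ((q.1.1, b₀, (0 : I)), q.2) := by fun_prop
    exact ((continuous_viaTop a₀ b₀).comp h).congr fun _ => rfl

theorem viaTop_homotopic_refl : (viaTop a₀ b₀ (a₀, b₀, 0)).Homotopic (Path.refl _) := by
  have h : Path.Homotopic _ _ := ⟨Path.Homotopy.subpathTransSubpath (segment a₀ b₀) 0 1 0⟩
  rwa [Path.subpath_self] at h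

theorem viaBottom_homotopic_viaTop (b : B) (t : I) :
    (viaBottom a₀ b₀ (a₀, b, t)).Homotopic (viaTop a₀ b₀ (a₀, b, t)) := by
  have h := mk_zero a₀ b b₀
  have hloop := (viaTop_homotopic_refl a₀ b₀).pathCast h rfl
  have hsplit : Path.Homotopic ((segment a₀ b).subpath t 0) _ :=
    ⟨(Path.Homotopy.subpathTransSubpath _ t 1 0).symm⟩
  exact ((Path.Homotopic.refl _).hcomp hloop).trans
    ((Path.Homotopic.trans_cast_refl _ h).trans (hsplit.pathCast rfl h.symm))

theorem coe_viaTop_eq_of_mk_eq {p q : A × B × I} (h : mk p = mk q) (hp : p.2.2 ≠ 0) :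
    ⇑(viaTop a₀ b₀ p) = ⇑(viaTop a₀ b₀ q) := by
  refine apply_eq_of_mk_eq (S := {t | t ≠ 0}) (fun p => ⇑(viaTop a₀ b₀ p)) ?_ h hp
  rintro _ _ (⟨a, b, b'⟩ | ⟨a, a', b⟩) h
  · exact absurd rfl h
  simp only [viaTop, Path.subpath_self]
  exact Path.coe_trans_congr (funext fun _ => mk_one a a' b) rfl

theorem coe_viaBottom_eq_of_mk_eq {p q : A × B × I} (h : mk p = mk q) (hp : p.2.2 ≠ 1) :
    ⇑(viaBottom a₀ b₀ p) = ⇑(viaBottom a₀ b₀ q) := by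
  refine apply_eq_of_mk_eq (S := {t | t ≠ 1}) (fun p => ⇑(viaBottom a₀ b₀ p)) ?_ h hp
  rintro _ _ (⟨a, b, b'⟩ | ⟨a, a', b⟩) h
  · simp only [viaBottom, Path.subpath_self]
    exact Path.coe_trans_congr (funext fun _ => mk_zero a b b') rfl
  · exact absurd rfl h

theorem evalAt_homotopic [PathConnectedSpace A]
    (F : ((ContinuousMap.id _).restrict lower).Homotopy (.const lower (mk (a₀, b₀, 0))))
    (G : ((ContinuousMap.id _).restrict upper).Homotopy (.const upper (mk (a₀, b₀, 0))))
    (hF : ∀ p (hp : mk p ∈ lower), F.evalAt ⟨mk p, hp⟩ = viaBottom a₀ b₀ p)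
    (hG : ∀ p (hp : mk p ∈ upper), G.evalAt ⟨mk p, hp⟩ = viaTop a₀ b₀ p)
    (x : Join A B) (hxU : x ∈ lower) (hxV : x ∈ upper) :
    (F.evalAt ⟨x, hxU⟩).Homotopic (G.evalAt ⟨x, hxV⟩) := by
  obtain ⟨⟨a, b, t⟩, rfl⟩ := isQuotientMap_mk.surjective x
  -- `δ` stays at height `t`, so both homotopies transport along it: this reduces to `a = a₀`.
  let δ : Path (mk (a, b, t)) (mk (a₀, b, t)) :=
    (PathConnectedSpace.somePath a a₀).map (f := fun a => mk (a, b, t)) (by fun_prop)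
  have hδU : range δ ⊆ lower := by rintro _ ⟨s, rfl⟩; exact hxU
  have hδV : range δ ⊆ upper := by rintro _ ⟨s, rfl⟩; exact hxV
  have hyU : mk (a₀, b, t) ∈ lower := hxU
  have hyV : mk (a₀, b, t) ∈ upper := hxV
  have hFδ := F.trans_evalAt_eq (x := ⟨_, hxU⟩) (y := ⟨_, hyU⟩) δ hδU
  have hGδ := G.trans_evalAt_eq (x := ⟨_, hxV⟩) (y := ⟨_, hyV⟩) δ hδV
  have hy : Path.Homotopic.Quotient.mk (F.evalAt ⟨_, hyU⟩) = .mk (G.evalAt ⟨_, hyV⟩) := by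
    rw [hF _ hyU, hG _ hyV]
    exact Path.Homotopic.Quotient.eq.mpr (viaBottom_homotopic_viaTop a₀ b₀ b t)
  exact Path.Homotopic.Quotient.eq.mp (hFδ.symm.trans (hy ▸ hGδ))

end Join

/-- If `A` is path-connected and `B` is nonempty, the join `A ∗ B` is simply
connected. -/
theorem join_simply_connected (A B : Type) [TopologicalSpace A]
    [TopologicalSpace B] [PathConnectedSpace A] [Nonempty B] :
    SimplyConnectedSpace (Join A B) := by
  obtain ⟨a₀⟩ : Nonempty A := PathConnectedSpace.nonempty
  obtain ⟨b₀⟩ := ‹Nonempty B›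
  obtain ⟨F, hF⟩ := Join.isQuotientMap_mk.exists_homotopy_restrict_const Join.isOpen_lower
    (Join.viaBottom a₀ b₀) (Join.continuous_viaBottom a₀ b₀)
    fun p q h hp => Join.coe_viaBottom_eq_of_mk_eq a₀ b₀ h hp
  obtain ⟨G, hG⟩ := Join.isQuotientMap_mk.exists_homotopy_restrict_const Join.isOpen_upper
    (Join.viaTop a₀ b₀) (Join.continuous_viaTop a₀ b₀)
    fun p q h hp => Join.coe_viaTop_eq_of_mk_eq a₀ b₀ h hp
  exact .of_isOpen_union Join.isOpen_lower Join.isOpen_upper Join.lower_union_upper F G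
    (Join.evalAt_homotopic a₀ b₀ F G hF hG)
end
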